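/- (Partition of twiddle indices.) Write q ∈ {1,...,2^{m−1}} as q = ∑_{r=1}^t 2^{i_r} with i_1 > i_2 > ... > i_t ≥ 0. Then the sets S_s = {2^{i_1} + ... + 2^{i_{s−1}} + [j]_{i_s} : j ∈ {0,...,2^{i_s}−1}}, for s ∈ {1,...,t}, form a partition of {0,...,q−1}. -/

import Mathlib

open Finset

/-- The `k`-bit bit-reversal permutation on `{0, ..., 2^k - 1}`. -/
def bitRev (k i : ℕ) : ℕ := ∑ j ∈ Finset.range k, 2 ^ (k - 1 - j) * (i / 2 ^ j % 2)

private lemma digit_sum_lt (b : ℕ → ℕ) (hb : ∀ j, b j ≤ 1) (k : ℕ) :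
    ∑ j ∈ range k, 2 ^ j * b j < 2 ^ k := by
  induction k with
  | zero => simp
  | succ k ih =>
    rw [Finset.sum_range_succ, pow_succ]
    have h1 := hb k
    have h2 : 2 ^ k * b k ≤ 2 ^ k * 1 := Nat.mul_le_mul_left _ h1
    omega

private lemma digit_sum_extract (b : ℕ → ℕ) (hb : ∀ j, b j ≤ 1) (k l : ℕ) :
    (∑ j ∈ range k, 2 ^ j * b j) / 2 ^ l % 2 = if l < k then b l else 0 := by
  induction k with
  | zero => simp
  | succ k ih =>
    rw [Finset.sum_range_succ]
    rcases lt_trichotomy l k with h | h | h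
    · obtain ⟨d, hd⟩ : (2:ℕ) ^ (l + 1) ∣ 2 ^ k := pow_dvd_pow 2 h
      have hk : (2:ℕ) ^ k = 2 ^ l * (2 * d) := by rw [hd, pow_succ]; ring
      have hdiv : (∑ j ∈ range k, 2 ^ j * b j + 2 ^ k * b k) / 2 ^ l
          = (∑ j ∈ range k, 2 ^ j * b j) / 2 ^ l + 2 * d * b k := by
        rw [show ∑ j ∈ range k, 2 ^ j * b j + 2 ^ k * b k
            = ∑ j ∈ range k, 2 ^ j * b j + 2 ^ l * (2 * d * b k) by rw [hk]; ring]
        exact Nat.add_mul_div_left _ _ (Nat.two_pow_pos l)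
      rw [hdiv, show (∑ j ∈ range k, 2 ^ j * b j) / 2 ^ l + 2 * d * b k
          = (∑ j ∈ range k, 2 ^ j * b j) / 2 ^ l + 2 * (d * b k) by ring,
        Nat.add_mul_mod_self_left, ih, if_pos h, if_pos (by omega)]
    · subst h
      have hlt := digit_sum_lt b hb l
      rw [Nat.add_mul_div_left _ _ (Nat.two_pow_pos l),
        Nat.div_eq_of_lt hlt, Nat.zero_add, Nat.mod_eq_of_lt (by have := hb l; omega),
        if_pos (Nat.lt_succ_self l)]
    · have h1 := digit_sum_lt b hb k
      have h2 := hb k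
      have h3 : 2 ^ (k + 1) ≤ 2 ^ l := Nat.pow_le_pow_right (by norm_num) h
      rw [pow_succ] at h3
      have h4 : 2 ^ k * b k ≤ 2 ^ k * 1 := Nat.mul_le_mul_left _ h2
      have hlt : ∑ j ∈ range k, 2 ^ j * b j + 2 ^ k * b k < 2 ^ l := by omega
      rw [Nat.div_eq_of_lt hlt, if_neg (by omega)]

private lemma sum_digits (x k : ℕ) : ∑ j ∈ range k, 2 ^ j * (x / 2 ^ j % 2) = x % 2 ^ k := by
  induction k with
  | zero => simp [Nat.mod_one]
  | succ k ih =>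
    rw [Finset.sum_range_succ, ih, pow_succ, Nat.mod_mul]

private lemma bitRev_eq (k x : ℕ) :
    bitRev k x = ∑ j ∈ range k, 2 ^ j * (x / 2 ^ (k - 1 - j) % 2) := by
  rw [bitRev, ← Finset.sum_range_reflect (fun j => 2 ^ j * (x / 2 ^ (k - 1 - j) % 2)) k]
  apply Finset.sum_congr rfl
  intro j hj
  rw [Finset.mem_range] at hj
  have h1 : k - 1 - (k - 1 - j) = j := by omega
  simp only [h1]

private lemma bitRev_lt (k x : ℕ) : bitRev k x < 2 ^ k := by
  rw [bitRev_eq]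
  exact digit_sum_lt _ (fun j => Nat.le_of_lt_succ (Nat.mod_lt _ (by norm_num))) k

private lemma bitRev_bitRev (k x : ℕ) (hx : x < 2 ^ k) : bitRev k (bitRev k x) = x := by
  rw [bitRev_eq k (bitRev k x)]
  have hb : ∀ j, x / 2 ^ (k - 1 - j) % 2 ≤ 1 :=
    fun j => Nat.le_of_lt_succ (Nat.mod_lt _ (by norm_num))
  have key : ∀ j ∈ range k, 2 ^ j * (bitRev k x / 2 ^ (k - 1 - j) % 2)
      = 2 ^ j * (x / 2 ^ j % 2) := by
    intro j hj
    rw [Finset.mem_range] at hj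
    rw [bitRev_eq k x, digit_sum_extract _ hb, if_pos (by omega : k - 1 - j < k)]
    have h2 : k - 1 - (k - 1 - j) = j := by omega
    rw [h2]
  rw [Finset.sum_congr rfl key, sum_digits, Nat.mod_eq_of_lt hx]

private lemma image_shift_bitRev (c k : ℕ) :
    (Finset.range (2 ^ k)).image (fun j => c + bitRev k j) = Finset.Ico c (c + 2 ^ k) := by
  ext x
  simp only [Finset.mem_image, Finset.mem_range, Finset.mem_Ico]
  constructor
  · rintro ⟨j, hj, rfl⟩
    have := bitRev_lt k j
    omega
  · rintro ⟨h1, h2⟩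
    refine ⟨bitRev k (x - c), bitRev_lt k (x - c), ?_⟩
    rw [bitRev_bitRev k (x - c) (by omega)]
    omega

/-- Partition of twiddle indices: writing `q ∈ {1, ..., 2^{m-1}}` as
`q = 2^{i_1} + ⋯ + 2^{i_t}` with `i_1 > ⋯ > i_t ≥ 0`, the sets
`S_s = {2^{i_1} + ⋯ + 2^{i_{s-1}} + [j]_{i_s} : j < 2^{i_s}}` for `s ∈ {1, ..., t}`
form a partition of `{0, ..., q-1}`: their union is `{0, ..., q-1}` and they are
pairwise disjoint. -/
theorem twiddle_partition (m t : ℕ) (ht : 1 ≤ t) (i : ℕ → ℕ)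
    (hdec : ∀ r, r + 1 < t → i (r + 1) < i r) (q : ℕ)
    (hq : q = ∑ r ∈ Finset.range t, 2 ^ i r)
    (hq1 : 1 ≤ q) (hqm : q ≤ 2 ^ (m - 1)) :
    ((Finset.range t).biUnion fun s =>
        (Finset.range (2 ^ i s)).image fun j =>
          (∑ r ∈ Finset.range s, 2 ^ i r) + bitRev (i s) j)
      = Finset.range q ∧
    ∀ s₁ < t, ∀ s₂ < t, s₁ ≠ s₂ →
      Disjoint
        ((Finset.range (2 ^ i s₁)).image fun j =>
          (∑ r ∈ Finset.range s₁, 2 ^ i r) + bitRev (i s₁) j)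
        ((Finset.range (2 ^ i s₂)).image fun j =>
          (∑ r ∈ Finset.range s₂, 2 ^ i r) + bitRev (i s₂) j) := by
  set P : ℕ → ℕ := fun s => ∑ r ∈ Finset.range s, 2 ^ i r with hP
  have hPs : ∀ s, P (s + 1) = P s + 2 ^ i s := fun s => Finset.sum_range_succ _ s
  have hPmono : Monotone P := monotone_nat_of_le_succ
    (fun s => by rw [hPs]; exact Nat.le_add_right _ _)
  have himg : ∀ s, (Finset.range (2 ^ i s)).image
      (fun j => (∑ r ∈ Finset.range s, 2 ^ i r) + bitRev (i s) j)
      = Finset.Ico (P s) (P (s + 1)) := by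
    intro s
    rw [image_shift_bitRev, hPs]
  constructor
  · have key : ∀ n, (Finset.range n).biUnion (fun s => Finset.Ico (P s) (P (s + 1)))
        = Finset.range (P n) := by
      intro n
      induction n with
      | zero => simp [hP]
      | succ n ih =>
        rw [Finset.range_add_one, Finset.biUnion_insert, ih]
        ext x
        simp only [Finset.mem_union, Finset.mem_Ico, Finset.mem_range]
        have h1 : P n ≤ P (n + 1) := hPmono (Nat.le_succ n)
        omega
    rw [Finset.biUnion_congr rfl (fun s _ => himg s), key, hq]
  · intro s₁ _ s₂ _ hne
    rw [himg, himg]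
    rcases hne.lt_or_gt with h | h
    · have hle : P (s₁ + 1) ≤ P s₂ := hPmono h
      simp only [Finset.disjoint_left, Finset.mem_Ico]
      omega
    · have hle : P (s₂ + 1) ≤ P s₁ := hPmono h
      simp only [Finset.disjoint_left, Finset.mem_Ico]
      omega
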